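/- arXiv:2505.19989 — 4 statements merged into one kernel-verified Lean document; each statement's English description precedes it below -/
import Mathlib

section
/- Let G = (A, B, E) be a bipartite graph where every vertex of A has degree exactly D, and suppose that for every S ⊆ A with |S| > 2t we have |N(S)| > t·D. If F ⊆ A is a set of at most t 'faulty' vertices, define a vertex b ∈ B to be blocked if it has a neighbor in F. Then the set of a ∈ A all of whose neighbors are blocked has size at most 2t. -/
/-- Bipartite expander blocking lemma: if every vertex of `A` has degree `D`, and
every `S ⊆ A` with `|S| > 2*t` has neighborhood `|N(S)| > t*D`, then for any
faulty set `F ⊆ A` with `|F| ≤ t`, the set of vertices of `A` all of whose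
neighbors are blocked (i.e. lie in `N(F)`) has size at most `2*t`. -/
theorem expander_blocked_le {α β : Type*} [Fintype α] [DecidableEq α] [DecidableEq β]
    (N : α → Finset β) (D t : ℕ) (hdeg : ∀ a, (N a).card = D)
    (hexp : ∀ S : Finset α, 2 * t < S.card → t * D < (S.biUnion N).card)
    (F : Finset α) (hF : F.card ≤ t) :
    (Finset.univ.filter (fun a => ∀ b ∈ N a, b ∈ F.biUnion N)).card ≤ 2 * t := by
  set S := Finset.univ.filter (fun a => ∀ b ∈ N a, b ∈ F.biUnion N) with hS
  by_contra h
  push_neg at h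
  have h1 := hexp S h
  have hsub : S.biUnion N ⊆ F.biUnion N := by
    intro b hb
    obtain ⟨a, ha, hba⟩ := Finset.mem_biUnion.mp hb
    exact (Finset.mem_filter.mp ha).2 b hba
  have h2 : (F.biUnion N).card ≤ t * D :=
    calc (F.biUnion N).card ≤ ∑ a ∈ F, (N a).card := Finset.card_biUnion_le
      _ = F.card * D := by simp [hdeg, Finset.sum_const]
      _ ≤ t * D := Nat.mul_le_mul_right D hF
  exact absurd (Finset.card_le_card hsub) (by omega)
end

section
/- In the partially synchronous BA protocol, if a value v1 obtains a commit proof in view w1, then no key proof for any value v2 ≠ v1 can be generated in any view w ≥ w1. Formally: model proofs as a relation where a commit proof at view w1 for v1 implies a set Q of at least t+1 honest parties hold a lock (v1, w1); any key proof at view w requires n - t signatures, hence a signature from some q ∈ Q; an honest q with lock (v1, w1) signs a key for v2 ≠ v1 only if accompanied by a key proof for v2 at some view w' with w1 ≤ w' < w. By minimality of the first violating view, no such key proof exists. -/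
/-- Agreement core of the partially synchronous BA protocol: if a value `v1`
obtains a commit proof in view `w1`, then no key proof for `v2 ≠ v1` can be
generated in any view `w ≥ w1`. Model: a commit proof at `(v1, w1)` yields a set
`Q` of at least `t+1` honest parties holding a lock `(v1, w1)`; a key proof at
`(v2, w)` requires `n - t` signers, hence a signer `q ∈ Q`; an honest `q` with
lock `(v1, w1)` signs a key for `v2` at view `w ≥ w1` only if `v2 = v1` or there
is a key proof for `v2` at some view `w'` with `w1 ≤ w' < w`. -/
theorem commit_blocks_other_keys (n t : ℕ) (h3t : 3 * t < n)
    {V : Type*} (Honest : Fin n → Prop) [DecidablePred Honest]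
    (hbyz : (Finset.univ.filter (fun p => ¬ Honest p)).card ≤ t)
    (Key Commit : V → ℕ → Prop)
    (HasLock SignedKey : Fin n → V → ℕ → Prop)
    (hCommit : ∀ v w, Commit v w →
      ∃ Q : Finset (Fin n), t + 1 ≤ Q.card ∧ ∀ q ∈ Q, Honest q ∧ HasLock q v w)
    (hKeyQuorum : ∀ v w, Key v w →
      ∃ S : Finset (Fin n), n - t ≤ S.card ∧ ∀ q ∈ S, SignedKey q v w)
    (hHonestSign : ∀ q v1 w1 v2 w, Honest q → HasLock q v1 w1 → SignedKey q v2 w →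
      w1 ≤ w → v2 = v1 ∨ ∃ w', w1 ≤ w' ∧ w' < w ∧ Key v2 w')
    (hKeyUnique : ∀ v v' w, Key v w → Key v' w → v = v')
    (v1 : V) (w1 : ℕ) (hc : Commit v1 w1) :
    ∀ v2 w, w1 ≤ w → Key v2 w → v2 = v1 := by
  intro v2 w
  induction w using Nat.strong_induction_on generalizing v2 with
  | _ w ih =>
    intro hw hk
    obtain ⟨Q, hQcard, hQ⟩ := hCommit v1 w1 hc
    obtain ⟨S, hScard, hS⟩ := hKeyQuorum v2 w hk
    have hinter : (Q ∩ S).Nonempty := by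
      rw [← Finset.card_pos]
      have hun : (Q ∪ S).card ≤ n := by
        simpa using Finset.card_le_card (Finset.subset_univ (Q ∪ S))
      have := Finset.card_inter_add_card_union Q S
      omega
    obtain ⟨q, hq⟩ := hinter
    have hqQ := Finset.mem_inter.mp hq |>.1
    have hqS := Finset.mem_inter.mp hq |>.2
    obtain ⟨hhon, hlock⟩ := hQ q hqQ
    rcases hHonestSign q v1 w1 v2 w hhon hlock (hS q hqS) hw with h | ⟨w', hw1, hww, hk'⟩
    · exact h
    · exact ih w' hww v2 hw1 hk'
end

section
/- Define a well-founded 'key proof provenance' relation: every valid key proof either derives from a strictly earlier lock proof (which derives from a strictly earlier key proof) or from a (t+1)-threshold signature on the value. Then for any value v with a valid key proof, there exist t+1 parties that signed v as their input; since at most t parties are faulty, at least one honest party had input v. -/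
/-- Strong unanimity provenance: if every valid key proof either derives from a
key proof at a strictly earlier view or from a `(t+1)`-threshold signature on its
value (by parties whose input is that value), then every value with a key proof
was the input of `t+1` parties, hence of at least one honest (non-faulty) party,
since at most `t` parties are faulty. -/
theorem key_proof_provenance {V P : Type*} [Fintype P] [DecidableEq P] (t : ℕ)
    (Key : V → ℕ → Prop) (Input : P → V) (Faulty : Finset P) (hF : Faulty.card ≤ t)
    (hDerive : ∀ v w, Key v w →
      (∃ w' < w, Key v w') ∨ ∃ S : Finset P, S.card = t + 1 ∧ ∀ p ∈ S, Input p = v)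
    (v : V) (w : ℕ) (hk : Key v w) :
    (∃ S : Finset P, S.card = t + 1 ∧ ∀ p ∈ S, Input p = v) ∧
      ∃ p, p ∉ Faulty ∧ Input p = v := by
  have hS : ∃ S : Finset P, S.card = t + 1 ∧ ∀ p ∈ S, Input p = v := by
    induction w using Nat.strong_induction_on with
    | _ w ih =>
      rcases hDerive v w hk with ⟨w', hw', hk'⟩ | hS
      · exact ih w' hw' hk'
      · exact hS
  refine ⟨hS, ?_⟩
  obtain ⟨S, hcard, hin⟩ := hS
  have : ¬ S ⊆ Faulty := fun hsub => by
    have := Finset.card_le_card hsub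
    omega
  obtain ⟨p, hp, hpf⟩ := Finset.not_subset.mp this
  exact ⟨p, hpf, hin p hp⟩
end

section
/- In a bipartite graph (A, B) with |A| = n ≥ 2t + 1, uniform left-degree D, and expansion |N(S)| > t·D for all S ⊆ A with |S| > 2t, for any faulty set F ⊆ A with |F| ≤ t: the set of connected parties (those having a neighbor outside N(F)) has size at least n - 2t. -/
/-- Connectivity from expansion: in a bipartite graph on `A` with `|A| = n ≥ 2t+1`,
uniform left-degree `D`, and expansion `|S| > 2t → |N(S)| > t·D`, for any faulty
set `F ⊆ A` with `|F| ≤ t`, the set of connected parties (those with a neighbor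
outside `N(F)`) has size at least `n - 2t`. -/
theorem expander_connected_ge {α β : Type*} [Fintype α] [DecidableEq α] [DecidableEq β]
    (n t D : ℕ) (hcard : Fintype.card α = n) (hn : 2 * t + 1 ≤ n)
    (N : α → Finset β) (hdeg : ∀ a, (N a).card = D)
    (hexp : ∀ S : Finset α, 2 * t < S.card → t * D < (S.biUnion N).card)
    (F : Finset α) (hF : F.card ≤ t) :
    n - 2 * t ≤ (Finset.univ.filter (fun a => ¬ N a ⊆ F.biUnion N)).card := by
  set S : Finset α := Finset.univ.filter (fun a => N a ⊆ F.biUnion N) with hS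
  have hScard : S.card ≤ 2 * t := by
    by_contra h
    push_neg at h
    have h1 := hexp S h
    have h2 : S.biUnion N ⊆ F.biUnion N := by
      intro b hb
      rcases Finset.mem_biUnion.mp hb with ⟨a, ha, hab⟩
      exact (Finset.mem_filter.mp ha).2 hab
    have h3 : (F.biUnion N).card ≤ t * D :=
      (Finset.card_biUnion_le).trans (by
        calc ∑ a ∈ F, (N a).card = ∑ a ∈ F, D := by simp [hdeg]
        _ = F.card * D := by simp [Finset.sum_const, mul_comm]
        _ ≤ t * D := Nat.mul_le_mul_right D hF)
    exact absurd ((Finset.card_le_card h2).trans h3) (not_le.mpr h1)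
  have hcompl : (Finset.univ.filter (fun a => ¬ N a ⊆ F.biUnion N)).card
      = n - S.card := by
    rw [Finset.filter_not, Finset.card_sdiff_of_subset (Finset.filter_subset _ _),
      Finset.card_univ, hcard]
  rw [hcompl]
  omega
end
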